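/- Let G : B → C be a pointed functor between pointed groupoids, K(G) its strong homotopy kernel and P : K(G) → B the projection. Then the group homomorphism π₁(P) : π₁(K(G)) → π₁(B) is injective and its image equals the kernel of π₁(G) : π₁(B) → π₁(C); hence π₁(K(G)) is isomorphic to ker(π₁(G)). -/

import Mathlib

/-!
An automorphism of the basepoint `(b, β)` of `K(G)` is an automorphism `f` of `b` with
`G f ≫ β = β`, and `P` just forgets this compatibility, so `π₁(P)` is injective with image the
stabiliser of `β`. At the basepoint `β` is the identity up to `eqToHom`, so this stabiliser is
`ker π₁(G)`.
-/

open CategoryTheory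

universe w v₁ v₂ v₃ v₄ u₁ u₂ u₃ u₄

namespace Snail

variable {A : Type u₁} [Groupoid.{v₁} A] {B : Type u₂} [Groupoid.{v₂} B]

/-- The set of connected components (isomorphism classes of objects) of a groupoid. -/
def Pi0 (A : Type u₁) [Groupoid.{v₁} A] : Type u₁ :=
  Quotient (CategoryTheory.isIsomorphicSetoid A)

/-- The connected component of an object. -/
def pi0 (a : A) : Pi0 A := Quotient.mk (CategoryTheory.isIsomorphicSetoid A) a

/-- The map induced on connected components by a functor; for pointed functors
between pointed groupoids this is the induced pointed map `π₀(F)`. -/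
def pi0Map (F : A ⥤ B) : Pi0 A → Pi0 B :=
  Quotient.map F.obj fun _ _ h => Nonempty.map (fun i => F.mapIso i) h

/-- The group homomorphism `π₁(F) : Aut (*_A) →* Aut (*_B)` induced by a pointed
functor `F` (with `F.obj pA = pB`). -/
def pi1Map (F : A ⥤ B) {pA : A} {pB : B} (h : F.obj pA = pB) : Aut pA →* Aut pB :=
  (Aut.autMulEquivOfIso (eqToIso h)).toMonoidHom.comp (F.mapAut pA)

/-- The strong homotopy kernel `K(F)` of a functor `F : A ⥤ B` with respect to the
basepoint `pB` of `B` : objects are pairs `(a, β : F a ⟶ pB)`. -/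
structure HKer (F : A ⥤ B) (pB : B) : Type (max u₁ v₂) where
  pt : A
  arr : F.obj pt ⟶ pB

/-- Morphisms `(a, β) ⟶ (a', β')` in `K(F)` are morphisms `f : a ⟶ a'` of `A` with
`F.map f ≫ β' = β`. -/
instance hkerGroupoid (F : A ⥤ B) (pB : B) : Groupoid (HKer F pB) where
  Hom x y := { f : x.pt ⟶ y.pt // F.map f ≫ y.arr = x.arr }
  id x := ⟨𝟙 x.pt, by simp⟩
  comp {x y z} f g := ⟨f.1 ≫ g.1, by rw [F.map_comp, Category.assoc, g.2, f.2]⟩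
  id_comp f := Subtype.ext (Category.id_comp f.1)
  comp_id f := Subtype.ext (Category.comp_id f.1)
  assoc f g h := Subtype.ext (Category.assoc f.1 g.1 h.1)
  inv {x y} f := ⟨Groupoid.inv f.1, by
    obtain ⟨g, h⟩ := f
    dsimp only
    rw [← h, ← Category.assoc, ← F.map_comp, Groupoid.inv_comp, F.map_id, Category.id_comp]⟩
  inv_comp f := Subtype.ext (Groupoid.inv_comp f.1)
  comp_inv f := Subtype.ext (Groupoid.comp_inv f.1)

/-- The projection functor `P : K(F) ⥤ A`, `(a, β) ↦ a`, `f ↦ f`. -/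
def hkerProj (F : A ⥤ B) (pB : B) : HKer F pB ⥤ A where
  obj x := x.pt
  map f := f.1
  map_id _ := rfl
  map_comp _ _ := rfl

@[simp]
theorem pi1Map_hom (F : A ⥤ B) {pA : A} {pB : B} (h : F.obj pA = pB) (a : Aut pA) :
    (pi1Map F h a).hom = eqToHom h.symm ≫ F.map a.hom ≫ eqToHom h :=
  rfl

theorem pi1Map_eq_one_iff (F : A ⥤ B) {pA : A} {pB : B} (h : F.obj pA = pB) (a : Aut pA) :
    pi1Map F h a = 1 ↔ F.map a.hom ≫ eqToHom h = eqToHom h := by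
  rw [Aut.ext_iff, pi1Map_hom]
  subst h
  simp only [eqToHom_refl, Category.comp_id, Category.id_comp]
  exact Iff.rfl

section HKer

variable {F : A ⥤ B} {pB : B} (x : HKer F pB)

@[simp]
theorem pi1Map_hkerProj_hom (k : Aut x) : (pi1Map (hkerProj F pB) rfl k).hom = k.hom.1 := by
  simp only [pi1Map_hom, eqToHom_refl, Category.comp_id, Category.id_comp]
  rfl

theorem pi1Map_hkerProj_injective :
    Function.Injective (pi1Map (hkerProj F pB) (rfl : (hkerProj F pB).obj x = x.pt)) :=
  fun k k' h => by
    have h_hom := congrArg Iso.hom h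
    simp only [pi1Map_hkerProj_hom] at h_hom
    exact Aut.ext (Subtype.ext h_hom)

theorem exists_pi1Map_hkerProj_eq_iff (a : Aut x.pt) :
    (∃ k : Aut x, pi1Map (hkerProj F pB) rfl k = a) ↔ F.map a.hom ≫ x.arr = x.arr := by
  constructor
  · rintro ⟨k, rfl⟩
    rw [pi1Map_hkerProj_hom]
    exact k.hom.2
  · intro ha
    have ha' : F.map a.inv ≫ x.arr = x.arr := (F.mapIso a).inv_comp_eq.mpr ha.symm
    refine ⟨⟨⟨a.hom, ha⟩, ⟨a.inv, ha'⟩, Subtype.ext a.hom_inv_id, Subtype.ext a.inv_hom_id⟩, ?_⟩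
    exact Aut.ext (pi1Map_hkerProj_hom x _)

end HKer

variable {C : Type u₃} [Groupoid.{v₃} C]

/-- For a pointed functor `G : B ⥤ C` with strong homotopy kernel `K(G)` and
projection `P : K(G) ⥤ B`, the homomorphism `π₁(P)` is injective with image the
kernel of `π₁(G)`; hence `π₁(K(G))` is isomorphic to `ker (π₁(G))`. -/
theorem pi1_hkerProj_kernel {B : Type u₂} [Groupoid.{v₂} B] {C : Type u₃}
    [Groupoid.{v₃} C] (G : B ⥤ C) (pB : B) (pC : C) (hG : G.obj pB = pC) :
    Function.Injective (pi1Map (hkerProj G pC)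
      (rfl : (hkerProj G pC).obj ⟨pB, eqToHom hG⟩ = pB)) ∧
    (∀ b : Aut pB,
      (∃ k : Aut (⟨pB, eqToHom hG⟩ : HKer G pC),
        pi1Map (hkerProj G pC) rfl k = b) ↔ pi1Map G hG b = 1) ∧
    Nonempty (Aut (⟨pB, eqToHom hG⟩ : HKer G pC) ≃* (pi1Map G hG).ker) := by
  set x₀ : HKer G pC := ⟨pB, eqToHom hG⟩
  have hinj := pi1Map_hkerProj_injective x₀
  have hrange : ∀ b : Aut pB,
      (∃ k : Aut x₀, pi1Map (hkerProj G pC) rfl k = b) ↔ pi1Map G hG b = 1 := fun b =>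
    (exists_pi1Map_hkerProj_eq_iff x₀ b).trans (pi1Map_eq_one_iff G hG b).symm
  have hrange_eq_ker :
      (pi1Map (hkerProj G pC) (rfl : (hkerProj G pC).obj x₀ = pB)).range = (pi1Map G hG).ker :=
    Subgroup.ext fun b => hrange b
  exact ⟨hinj, hrange, ⟨(MonoidHom.ofInjective hinj).trans (MulEquiv.subgroupCongr hrange_eq_ker)⟩⟩

end Snail
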